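/- Let q be a prime power and let 1 ≤ r ≤ k ≤ n be integers. Then 𝒞_q(n+1, k+1, r) ≤ 𝒞_q(n, k, r). -/

import Mathlib

open Module

/-- `coveringNumber F n k r` is the minimum number of `k`-dimensional `F`-linear subspaces
of `F^n` needed so that every `r`-dimensional subspace is contained in at least one of them. -/
noncomputable def coveringNumber (F : Type) [Field F] (n k r : ℕ) : ℕ :=
  sInf { m : ℕ | ∃ S : Finset (Submodule F (Fin n → F)),
    S.card = m ∧
    (∀ X ∈ S, finrank F X = k) ∧
    (∀ Y : Submodule F (Fin n → F), finrank F Y = r → ∃ X ∈ S, Y ≤ X) }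

/-!
Pull a covering of `F^n` back along the coordinate projection `π : F^{n+1} → F^n`. Since `π`
is surjective with a one-dimensional kernel, `X ↦ π⁻¹ X` is injective and raises dimensions by
one. An `r`-space `Y ≤ F^{n+1}` projects to a space of dimension at most `r`, which lies in an
`r`-space of `F^n` and hence in some `X` of the covering; then `Y ≤ π⁻¹ X`.
-/

section

variable {K V W : Type*} [Field K] [AddCommGroup V] [Module K V] [AddCommGroup W] [Module K W]

lemma Submodule.finrank_comap_of_surjective [FiniteDimensional K V] {π : V →ₗ[K] W}
    (hπ : Function.Surjective π) (X : Submodule K W) :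
    finrank K (X.comap π) = finrank K X + finrank K (LinearMap.ker π) := by
  set p := X.comap π
  have hker : LinearMap.ker π ≤ p := LinearMap.ker_le_comap π
  have hrange : LinearMap.range (π.domRestrict p) = X := by
    rw [LinearMap.range_domRestrict]
    exact Submodule.map_comap_eq_of_surjective hπ X
  have rank_nullity := LinearMap.finrank_range_add_finrank_ker (π.domRestrict p)
  rw [hrange, LinearMap.ker_domRestrict] at rank_nullity
  rw [← rank_nullity, (Submodule.comapSubtypeEquivOfLe hker).finrank_eq]

lemma exists_submodule_finrank_eq [FiniteDimensional K V] {m : ℕ} (hm : m ≤ finrank K V) :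
    ∃ U : Submodule K V, finrank K U = m := by
  obtain ⟨v, hv⟩ := exists_linearIndependent_of_le_finrank hm
  exact ⟨Submodule.span K (Set.range v), by rw [finrank_span_eq_card hv, Fintype.card_fin]⟩

lemma Submodule.exists_le_finrank_eq [FiniteDimensional K V] (Y : Submodule K V) {k : ℕ}
    (hYk : finrank K Y ≤ k) (hk : k ≤ finrank K V) :
    ∃ Z : Submodule K V, Y ≤ Z ∧ finrank K Z = k := by
  obtain ⟨U, hU⟩ := exists_submodule_finrank_eq (K := K) (V := V ⧸ Y) (m := k - finrank K Y)
    (by rw [Submodule.finrank_quotient]; omega)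
  refine ⟨U.comap Y.mkQ, by simpa using LinearMap.ker_le_comap Y.mkQ (p := U), ?_⟩
  rw [Submodule.finrank_comap_of_surjective Y.mkQ_surjective, Submodule.ker_mkQ, hU]
  omega

def IsSubspaceCovering (S : Finset (Submodule K V)) (k r : ℕ) : Prop :=
  (∀ X ∈ S, finrank K X = k) ∧ ∀ Y : Submodule K V, finrank K Y = r → ∃ X ∈ S, Y ≤ X

lemma exists_isSubspaceCovering [Finite K] [FiniteDimensional K V] {k r : ℕ}
    (hrk : r ≤ k) (hk : k ≤ finrank K V) :
    ∃ S : Finset (Submodule K V), IsSubspaceCovering S k r := by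
  have : Finite V := Module.finite_of_finite K
  refine ⟨(Set.toFinite {X : Submodule K V | finrank K X = k}).toFinset,
    fun X hX => by simpa using hX, fun Y hY => ?_⟩
  obtain ⟨Z, hYZ, hZ⟩ := Y.exists_le_finrank_eq (hY ▸ hrk) hk
  exact ⟨Z, by simpa using hZ, hYZ⟩

lemma IsSubspaceCovering.comap [FiniteDimensional K V] {S : Finset (Submodule K W)} {k r : ℕ}
    (hS : IsSubspaceCovering S k r) {π : V →ₗ[K] W} (hπ : Function.Surjective π)
    (hr : r ≤ finrank K W) :
    IsSubspaceCovering (S.image (Submodule.comap π)) (k + finrank K (LinearMap.ker π)) r := by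
  have : FiniteDimensional K W := Module.Finite.of_surjective π hπ
  refine ⟨?_, fun Y hY => ?_⟩
  · simp only [Finset.mem_image, forall_exists_index, and_imp, forall_apply_eq_imp_iff₂]
    intro X hX
    rw [Submodule.finrank_comap_of_surjective hπ, hS.1 X hX]
  · have hπY : finrank K (Y.map π) ≤ r := hY ▸ Submodule.finrank_map_le π Y
    obtain ⟨Z, hπYZ, hZ⟩ := (Y.map π).exists_le_finrank_eq hπY hr
    obtain ⟨X, hX, hZX⟩ := hS.2 Z hZ
    exact ⟨X.comap π, Finset.mem_image_of_mem _ hX,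
      Submodule.map_le_iff_le_comap.1 (hπYZ.trans hZX)⟩

lemma coveringNumber_le {F : Type} [Field F] {n k r : ℕ} {S : Finset (Submodule F (Fin n → F))}
    (hS : IsSubspaceCovering S k r) : coveringNumber F n k r ≤ S.card :=
  Nat.sInf_le ⟨S, rfl, hS⟩

lemma exists_isSubspaceCovering_card_eq_coveringNumber (F : Type) [Field F] [Finite F]
    {n k r : ℕ} (hrk : r ≤ k) (hkn : k ≤ n) :
    ∃ S : Finset (Submodule F (Fin n → F)),
      IsSubspaceCovering S k r ∧ S.card = coveringNumber F n k r := by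
  obtain ⟨S₀, hS₀⟩ := exists_isSubspaceCovering (V := Fin n → F) hrk
    (by rwa [finrank_fin_fun])
  have hne : {m | ∃ S : Finset (Submodule F (Fin n → F)),
      S.card = m ∧ IsSubspaceCovering S k r}.Nonempty := ⟨_, S₀, rfl, hS₀⟩
  obtain ⟨S, hcard, hS⟩ := Nat.sInf_mem hne
  exact ⟨S, hS, hcard⟩

end

theorem lengthening_general (n k r : ℕ)
    (hrk : r ≤ k) (hkn : k ≤ n)
    (F : Type) [Field F] [Fintype F] :
    coveringNumber F (n + 1) (k + 1) r ≤ coveringNumber F n k r := by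
  obtain ⟨S, hS, hcard⟩ := exists_isSubspaceCovering_card_eq_coveringNumber F hrk hkn
  let π : (Fin (n + 1) → F) →ₗ[F] (Fin n → F) := LinearMap.funLeft F F Fin.castSucc
  have hπ : Function.Surjective π :=
    LinearMap.funLeft_surjective_of_injective F F _ (Fin.castSucc_injective n)
  have hker : finrank F (LinearMap.ker π) = 1 := by
    have rank_nullity := LinearMap.finrank_range_add_finrank_ker π
    rw [LinearMap.range_eq_top.2 hπ, finrank_top, finrank_fin_fun, finrank_fin_fun] at rank_nullity
    omega
  have hcov := hS.comap hπ (by rw [finrank_fin_fun]; omega)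
  rw [hker] at hcov
  calc coveringNumber F (n + 1) (k + 1) r
      ≤ (S.image (Submodule.comap π)).card := coveringNumber_le hcov
    _ = coveringNumber F n k r := by
        rw [Finset.card_image_of_injective _ (Submodule.comap_injective_of_surjective hπ), hcard]

/-- Lengthening: $\mathcal{C}_q(n+1,k+1,r) \le \mathcal{C}_q(n,k,r)$. -/
theorem lengthening (q n k r : ℕ) (hq : IsPrimePow q)
    (hr : 1 ≤ r) (hrk : r ≤ k) (hkn : k ≤ n)
    (F : Type) [Field F] [Fintype F] (hF : Fintype.card F = q) :
    coveringNumber F (n + 1) (k + 1) r ≤ coveringNumber F n k r :=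
  lengthening_general n k r hrk hkn F
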